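/- The LZ77 parse (without overlaps) of the length-n prefix of the Thue-Morse sequence has O(log n) phrases. -/

import Mathlib

variable {α : Type*} [DecidableEq α]

/-- The length of the next greedy LZ77 phrase without overlaps: the largest
`L` such that the length-`L` prefix of the remainder `t` occurs as a substring
of the already-parsed prefix `p` (`0` if there is none). -/
def lzNoLen (p t : List α) : ℕ :=
  Nat.findGreatest (fun L => 0 < L ∧ (t.take L) <:+: p) t.length

/-- Greedy LZ77 without overlaps: `p` is the already parsed prefix, `r` the
remainder. Each phrase is the longest nonempty prefix of `r` occurring
entirely earlier, or else a single fresh symbol. -/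
def lzNoAux (p r : List α) : List (List α) :=
  match r with
  | [] => []
  | a :: r' =>
    if hL : lzNoLen p (a :: r') = 0 then [a] :: lzNoAux (p ++ [a]) r'
    else ((a :: r').take (lzNoLen p (a :: r'))) ::
      lzNoAux (p ++ (a :: r').take (lzNoLen p (a :: r'))) ((a :: r').drop (lzNoLen p (a :: r')))
termination_by r.length
decreasing_by
  · simp
  · have := Nat.pos_of_ne_zero hL
    simp only [List.length_drop, List.length_cons]
    omega

/-- The greedy LZ77 parse without overlaps. -/
def lzNo (s : List α) : List (List α) := lzNoAux [] s

/-- The length of the next greedy LZ77 phrase with overlaps: the largest `L`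
such that the length-`L` prefix of the remainder `t` can be copied from a
source occurrence starting strictly before position `|p|` (possibly
overlapping the phrase itself). -/
def lzOvLen (p t : List α) : ℕ :=
  Nat.findGreatest
    (fun L => 0 < L ∧ ∃ j < p.length, ((p ++ t.take L).drop j).take L = t.take L)
    t.length

/-- Greedy LZ77 with overlaps between phrases and their sources. -/
def lzOvAux (p r : List α) : List (List α) :=
  match r with
  | [] => []
  | a :: r' =>
    if hL : lzOvLen p (a :: r') = 0 then [a] :: lzOvAux (p ++ [a]) r'
    else ((a :: r').take (lzOvLen p (a :: r'))) ::
      lzOvAux (p ++ (a :: r').take (lzOvLen p (a :: r'))) ((a :: r').drop (lzOvLen p (a :: r')))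
termination_by r.length
decreasing_by
  · simp
  · have := Nat.pos_of_ne_zero hL
    simp only [List.length_drop, List.length_cons]
    omega

/-- The greedy LZ77 parse with overlaps. -/
def lzOv (s : List α) : List (List α) := lzOvAux [] s


/-- The Thue-Morse sequence: parity of the number of 1 bits of `n`. -/
def thueMorse (n : ℕ) : Fin 2 := Fin.ofNat 2 (n.bits.count true)

/-- The prefix of length `n` of the Thue-Morse sequence. -/
def tmPrefix (n : ℕ) : List (Fin 2) := (List.range n).map thueMorse

/-!
A factor of the Thue–Morse word of length `L` at a position `m ≥ 7` with `14 L ≤ m + 28`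
already occurs inside `[0, m)`: since `t (2k) = t k` and `t (2k + 1) = t k + 1`, it is determined
by the factor of length `⌊L/2⌋ + 1` at `⌊m/2⌋`, which occurs earlier by induction, and doubling
that occurrence gives one for the original factor. Hence every non-final phrase starting at `m`
has length at least `(m + 8) / 14`, so the potential `m + 8` grows by a factor `15/14` with each
phrase, and there are `O(log n)` phrases.
-/

def lzNoPhraseLen (p t : List α) : ℕ := max 1 (lzNoLen p t)

theorem le_lzNoLen {p t : List α} {L : ℕ} (hL : 0 < L) (hLt : L ≤ t.length)
    (hocc : t.take L <:+: p) : L ≤ lzNoLen p t :=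
  Nat.le_findGreatest hLt ⟨hL, hocc⟩

theorem lzNoPhraseLen_le_length {p t : List α} (ht : t ≠ []) : lzNoPhraseLen p t ≤ t.length :=
  max_le (List.length_pos_iff.mpr ht) (Nat.findGreatest_le _)

theorem lzNoAux_nil (p : List α) : lzNoAux p [] = [] := by
  rw [lzNoAux]

theorem lzNoAux_take_drop_eq_cons (s : List α) {m : ℕ} (hm : m < s.length) :
    lzNoAux (s.take m) (s.drop m) =
      (s.drop m).take (lzNoPhraseLen (s.take m) (s.drop m)) ::
        lzNoAux (s.take (m + lzNoPhraseLen (s.take m) (s.drop m)))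
          (s.drop (m + lzNoPhraseLen (s.take m) (s.drop m))) := by
  obtain ⟨a, r, hr⟩ : ∃ a r, s.drop m = a :: r := ⟨_, _, List.drop_eq_getElem_cons hm⟩
  rw [List.take_add, ← List.drop_drop, hr, lzNoAux, lzNoPhraseLen]
  split_ifs with h0
  · simp [h0]
  · rw [max_eq_right (Nat.one_le_iff_ne_zero.mpr h0)]

theorem lzNoAux_take_drop_length_pow_le (s : List α) {b d : ℕ} (hb : 0 < b)
    (hphrase : ∀ m, m + lzNoPhraseLen (s.take m) (s.drop m) < s.length →
      m + d ≤ b * lzNoPhraseLen (s.take m) (s.drop m)) :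
    ∀ m ≤ s.length, (m + d) * (b + 1) ^ (lzNoAux (s.take m) (s.drop m)).length ≤
      (b + 1) * (s.length + d) * b ^ (lzNoAux (s.take m) (s.drop m)).length := by
  intro m hm
  induction h : s.length - m using Nat.strong_induction_on generalizing m with
  | _ k ih =>
  rcases hm.eq_or_lt with rfl | hlt
  · simp only [List.take_length, List.drop_length, lzNoAux_nil, List.length_nil, pow_zero, mul_one]
    nlinarith
  set L := lzNoPhraseLen (s.take m) (s.drop m) with hL
  have hL1 : 1 ≤ L := le_max_left _ _
  have hLle : L ≤ s.length - m := by
    simpa using lzNoPhraseLen_le_length (p := s.take m) (t := s.drop m) (by simpa using hlt)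
  rw [lzNoAux_take_drop_eq_cons s hlt, List.length_cons, ← hL]
  set z := (lzNoAux (s.take (m + L)) (s.drop (m + L))).length
  rcases hLle.lt_or_eq with hnonfinal | hfinal
  · have hgrow : m + d ≤ b * L := hphrase m (by omega)
    have ihL := ih (s.length - (m + L)) (by omega) (m + L) (by omega) rfl
    calc (m + d) * (b + 1) ^ (z + 1) = ((b + 1) * (m + d)) * (b + 1) ^ z := by ring
      _ ≤ (b * (m + L + d)) * (b + 1) ^ z := Nat.mul_le_mul_right _ (by nlinarith)
      _ = b * ((m + L + d) * (b + 1) ^ z) := by ring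
      _ ≤ b * ((b + 1) * (s.length + d) * b ^ z) := by gcongr
      _ = (b + 1) * (s.length + d) * b ^ (z + 1) := by ring
  · have hz : z = 0 := by simp [z, show m + L = s.length by omega, lzNoAux_nil]
    simp only [hz, zero_add, pow_one]
    calc (m + d) * (b + 1) ≤ ((s.length + d) * b) * (b + 1) := by gcongr; nlinarith
      _ = (b + 1) * (s.length + d) * b := by ring

theorem lzNo_length_pow_le (s : List α) {b d : ℕ} (hb : 0 < b)
    (hphrase : ∀ m, m + lzNoPhraseLen (s.take m) (s.drop m) < s.length →
      m + d ≤ b * lzNoPhraseLen (s.take m) (s.drop m)) :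
    d * (b + 1) ^ (lzNo s).length ≤ (b + 1) * (s.length + d) * b ^ (lzNo s).length := by
  simpa [lzNo] using lzNoAux_take_drop_length_pow_le s hb hphrase 0 (Nat.zero_le _)

section Sequence

variable {β : Type*} (x : ℕ → β)

theorem take_map_range {m n : ℕ} (h : m ≤ n) :
    ((List.range n).map x).take m = (List.range m).map x := by
  rw [← List.map_take, List.take_range, min_eq_left h]

theorem drop_map_range (m n : ℕ) :
    ((List.range n).map x).drop m = (List.range' m (n - m)).map x := by
  rw [← List.map_drop, List.range_eq_range', List.drop_range']
  simp

theorem map_range'_infix_map_range {j m L : ℕ} (hjm : j + L ≤ m)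
    (hx : ∀ i < L, x (j + i) = x (m + i)) :
    (List.range' m L).map x <:+: (List.range m).map x := by
  have hfactor : (List.range' m L).map x = (List.range' j L).map x :=
    List.ext_getElem (by simp) fun i hi _ => by simp [hx i (by simpa using hi)]
  refine ⟨(List.range j).map x, (List.range' (j + L) (m - (j + L))).map x, ?_⟩
  have hsplit := List.range'_append_1 (s := 0) (m := j) (n := L)
  have hsplit' := List.range'_append_1 (s := 0) (m := j + L) (n := m - (j + L))
  simp only [zero_add] at hsplit hsplit'
  rw [hfactor, ← List.map_append, ← List.map_append, List.range_eq_range', List.range_eq_range',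
    hsplit, hsplit', Nat.add_sub_of_le hjm]

end Sequence

theorem le_lzNoLen_map_range (x : ℕ → α) {j m n L : ℕ} (hL : 0 < L) (hmL : m + L ≤ n)
    (hjm : j + L ≤ m) (hx : ∀ i < L, x (j + i) = x (m + i)) :
    L ≤ lzNoLen (((List.range n).map x).take m) (((List.range n).map x).drop m) := by
  refine le_lzNoLen hL ?_ ?_
  · simp only [List.length_drop, List.length_map, List.length_range]
    omega
  rw [take_map_range x (by omega), drop_map_range, ← List.map_take,
    List.take_range'_of_length_ge (by omega)]
  exact map_range'_infix_map_range x hjm hx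

theorem thueMorse_two_mul (n : ℕ) : thueMorse (2 * n) = thueMorse n := by
  rcases Nat.eq_zero_or_pos n with rfl | h
  · rfl
  · unfold thueMorse
    rw [Nat.bit0_bits n h.ne']
    simp

theorem thueMorse_two_mul_add_one (n : ℕ) : thueMorse (2 * n + 1) = thueMorse n + 1 := by
  unfold thueMorse
  rw [Nat.bit1_bits]
  simp only [List.count_cons_self, Fin.ofNat_eq_cast, Fin.isValue]
  apply Fin.ext
  simp [Fin.val_add, Nat.add_mod]

theorem thueMorse_eq_of_div_two {p q : ℕ} (hpq : p % 2 = q % 2)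
    (h : thueMorse (p / 2) = thueMorse (q / 2)) : thueMorse p = thueMorse q := by
  rcases Nat.even_or_odd' p with ⟨a, rfl | rfl⟩ <;> rcases Nat.even_or_odd' q with ⟨c, rfl | rfl⟩
  · simpa [thueMorse_two_mul] using h
  · omega
  · omega
  · rw [show (2 * a + 1) / 2 = a by omega, show (2 * c + 1) / 2 = c by omega] at h
    rw [thueMorse_two_mul_add_one, thueMorse_two_mul_add_one, h]

theorem thueMorse_factors_length_two :
    ∀ a b : Fin 2, ∃ j ≤ 5, thueMorse j = a ∧ thueMorse (j + 1) = b := by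
  decide

theorem thueMorse_factor_occurs_before {L m : ℕ} (hL : 0 < L) (hm : 7 ≤ m)
    (hLm : 14 * L ≤ m + 28) :
    ∃ j, j + L ≤ m ∧ ∀ i < L, thueMorse (j + i) = thueMorse (m + i) := by
  induction L using Nat.strong_induction_on generalizing m with
  | _ L ih =>
  by_cases hL2 : L ≤ 2
  · obtain ⟨j, hj, h0, h1⟩ := thueMorse_factors_length_two (thueMorse m) (thueMorse (m + 1))
    exact ⟨j, by omega, fun i hi => by
      have : i < 2 := by omega
      interval_cases i <;> assumption⟩
  · obtain ⟨j, hj, hjm⟩ := @ih (L / 2 + 1) (by omega) (m / 2) (by omega) (by omega) (by omega)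
    refine ⟨2 * j + m % 2, by omega, fun i hi => thueMorse_eq_of_div_two (by omega) ?_⟩
    rw [show (2 * j + m % 2 + i) / 2 = j + (m % 2 + i) / 2 by omega,
      show (m + i) / 2 = m / 2 + (m % 2 + i) / 2 by omega]
    exact hjm _ (by omega)

theorem tmPrefix_lzNoPhraseLen_ge {n m : ℕ}
    (hfin : m + lzNoPhraseLen ((tmPrefix n).take m) ((tmPrefix n).drop m) < n) :
    m + 8 ≤ 14 * lzNoPhraseLen ((tmPrefix n).take m) ((tmPrefix n).drop m) := by
  set L := lzNoPhraseLen ((tmPrefix n).take m) ((tmPrefix n).drop m)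
  have hL1 : 1 ≤ L := le_max_left _ _
  rcases lt_or_ge m 7 with hm | hm
  · omega
  obtain ⟨j, hj, hjm⟩ := thueMorse_factor_occurs_before (L := min (n - m) ((m + 28) / 14))
    (by omega) hm (by omega)
  have hlong : min (n - m) ((m + 28) / 14) ≤ L :=
    le_max_of_le_right (le_lzNoLen_map_range thueMorse (by omega) (by omega) hj hjm)
  omega

theorem lzNo_tmPrefix_length_pow_le {n : ℕ} (hn : 2 ≤ n) :
    15 ^ (lzNo (tmPrefix n)).length ≤ n ^ 5 * 14 ^ (lzNo (tmPrefix n)).length := by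
  have hlen : (tmPrefix n).length = n := by simp [tmPrefix]
  have hpot := lzNo_length_pow_le (tmPrefix n) (b := 14) (d := 8) (by norm_num)
    fun _ hfin => tmPrefix_lzNoPhraseLen_ge (hfin.trans_eq hlen)
  have hn4 : 2 ^ 4 ≤ n ^ 4 := Nat.pow_le_pow_left hn 4
  have hpoly : 15 * (n + 8) ≤ 8 * n ^ 5 := by nlinarith
  rw [hlen] at hpot
  refine Nat.le_of_mul_le_mul_left ?_ (by norm_num : 0 < 8)
  calc 8 * 15 ^ _ ≤ 15 * (n + 8) * 14 ^ _ := hpot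
    _ ≤ 8 * n ^ 5 * 14 ^ _ := by gcongr
    _ = 8 * (n ^ 5 * 14 ^ _) := by ring

/-- the greedy LZ77 parse without overlaps of the length-`n`
prefix of the Thue–Morse sequence has `O(log n)` phrases. -/
theorem lzNo_tmPrefix_le_log :
    ∃ c : ℝ, 0 < c ∧ ∀ n : ℕ, 2 ≤ n →
      ((lzNo (tmPrefix n)).length : ℝ) ≤ c * Real.log n := by
  have hlog : 0 < Real.log (15 / 14) := Real.log_pos (by norm_num)
  refine ⟨5 / Real.log (15 / 14), div_pos (by norm_num) hlog, fun n hn => ?_⟩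
  set z := (lzNo (tmPrefix n)).length
  have hnat : 15 ^ z ≤ n ^ 5 * 14 ^ z := lzNo_tmPrefix_length_pow_le hn
  have hreal : ((15 : ℝ) / 14) ^ z ≤ (n : ℝ) ^ 5 := by
    rw [div_pow, div_le_iff₀ (by positivity)]
    exact_mod_cast hnat
  have hzlog : z * Real.log (15 / 14) ≤ 5 * Real.log n := by
    have := Real.log_le_log (by positivity) hreal
    rwa [Real.log_pow, Real.log_pow, Nat.cast_ofNat] at this
  rw [div_mul_eq_mul_div, le_div_iff₀ hlog]
  linarith
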